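/- Let B = ⊕_{g∈G} B_g be a homogeneously non-degenerate G-graded algebra with B_g·B_{g⁻¹}·B_g = B_g for all g, admitting for each g multipliers u_g, v_g of the linking algebra C_g with u_gv_g = e₁₁ and v_gu_g = e₂₂. Then for any g, h ∈ G the composition w_{g,h} = u_g u_h v_{gh} (of the extended maps) defines an invertible multiplier of D_g·D_{gh}, with inverse w_{g,h}⁻¹ = u_{gh} v_h v_g. -/

import Mathlib

/-!
Each extended map restricts to an isomorphism between suitable products of homogeneous
components, and `D_g D_{gh}` can be chased through the three factors of `w_{g,h}` using only
`B_a B_b ⊆ B_{ab}` and `B_a B_{a⁻¹} B_a = B_a`: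
on the left `D_g D_{gh} → B_{h⁻¹} B_h B_{(gh)⁻¹} → B_h B_{(gh)⁻¹} → D_g D_{gh}`
(by `v_{gh}`, `u_h`, `u_g`), on the right `D_g D_{gh} → B_g B_h B_{h⁻¹} → B_g B_h → D_g D_{gh}`
(by `u_g`, `u_h`, `v_{gh}`). Additivity, one-sided linearity, being mutually inverse and the
multiplier identity `(x w) y = x (w y)` all pass to composites of such restrictions.
-/

/-- The additive subgroup generated by products of elements of `S` and `T`. -/
def setMul {B : Type} [NonUnitalRing B] (S T : AddSubgroup B) : AddSubgroup B :=
  AddSubgroup.closure (Set.image2 (· * ·) (S : Set B) (T : Set B))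

variable {G : Type} [Group G] {B : Type} [NonUnitalRing B]

/-- Membership in the linking algebra
`C_g = [[B_g B_{g⁻¹}, B_g], [B_{g⁻¹}, B_{g⁻¹} B_g]]`, realized inside the
`2 × 2` matrices over `B`. -/
def CgMem (Bc : G → AddSubgroup B) (g : G) (x : Matrix (Fin 2) (Fin 2) B) : Prop :=
  x 0 0 ∈ setMul (Bc g) (Bc g⁻¹) ∧ x 0 1 ∈ Bc g ∧
  x 1 0 ∈ Bc g⁻¹ ∧ x 1 1 ∈ setMul (Bc g⁻¹) (Bc g)

/-- A multiplier `(L, Rm)` of the linking algebra `C_g`. -/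
structure LinkMult (Bc : G → AddSubgroup B) (g : G) where
  L : Matrix (Fin 2) (Fin 2) B → Matrix (Fin 2) (Fin 2) B
  Rm : Matrix (Fin 2) (Fin 2) B → Matrix (Fin 2) (Fin 2) B
  L_mem : ∀ x, CgMem Bc g x → CgMem Bc g (L x)
  R_mem : ∀ x, CgMem Bc g x → CgMem Bc g (Rm x)
  L_add : ∀ x y, CgMem Bc g x → CgMem Bc g y → L (x + y) = L x + L y
  R_add : ∀ x y, CgMem Bc g x → CgMem Bc g y → Rm (x + y) = Rm x + Rm y
  L_mul : ∀ x y, CgMem Bc g x → CgMem Bc g y → L (x * y) = L x * y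
  R_mul : ∀ x y, CgMem Bc g x → CgMem Bc g y → Rm (x * y) = x * Rm y
  compat : ∀ x y, CgMem Bc g x → CgMem Bc g y → Rm x * y = x * L y

/-- Left action of the corner multiplier `e₁₁` on `C_g`. -/
def me11L (x : Matrix (Fin 2) (Fin 2) B) : Matrix (Fin 2) (Fin 2) B :=
  !![x 0 0, x 0 1; 0, 0]

/-- Right action of the corner multiplier `e₁₁` on `C_g`. -/
def me11R (x : Matrix (Fin 2) (Fin 2) B) : Matrix (Fin 2) (Fin 2) B :=
  !![x 0 0, 0; x 1 0, 0]

/-- Left action of the corner multiplier `e₂₂` on `C_g`. -/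
def me22L (x : Matrix (Fin 2) (Fin 2) B) : Matrix (Fin 2) (Fin 2) B :=
  !![0, 0; x 1 0, x 1 1]

/-- Right action of the corner multiplier `e₂₂` on `C_g`. -/
def me22R (x : Matrix (Fin 2) (Fin 2) B) : Matrix (Fin 2) (Fin 2) B :=
  !![0, x 0 1; 0, x 1 1]

/-- `u_g v_g = e₁₁` and `v_g u_g = e₂₂` in the multiplier algebra of `C_g`
(recall `L_{uv} = L_u ∘ L_v` and `R_{uv} = R_v ∘ R_u`). -/
def CornerUVg (Bc : G → AddSubgroup B) (g : G) (u v : LinkMult Bc g) : Prop :=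
  (∀ x, CgMem Bc g x → u.L (v.L x) = me11L x) ∧
  (∀ x, CgMem Bc g x → v.Rm (u.Rm x) = me11R x) ∧
  (∀ x, CgMem Bc g x → v.L (u.L x) = me22L x) ∧
  (∀ x, CgMem Bc g x → u.Rm (v.Rm x) = me22R x)

open Set

local infixl:70 " ⬝ " => setMul

theorem mul_mem_setMul {S T : AddSubgroup B} {a b : B} (ha : a ∈ S) (hb : b ∈ T) :
    a * b ∈ S ⬝ T :=
  AddSubgroup.subset_closure (mem_image2_of_mem ha hb)

theorem setMul_le {S T U : AddSubgroup B} : S ⬝ T ≤ U ↔ ∀ a ∈ S, ∀ b ∈ T, a * b ∈ U := by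
  rw [setMul, AddSubgroup.closure_le, image2_subset_iff]
  rfl

@[gcongr]
theorem setMul_mono {S S' T T' : AddSubgroup B} (hS : S ≤ S') (hT : T ≤ T') : S ⬝ T ≤ S' ⬝ T' :=
  setMul_le.2 fun _ ha _ hb => mul_mem_setMul (hS ha) (hT hb)

open Pointwise in
theorem setMul_eq_mul (S T : AddSubgroup B) : S ⬝ T = S * T :=
  le_antisymm (setMul_le.2 fun _ ha _ hb => AddSubmonoid.mul_mem_mul ha hb)
    (show S.toAddSubmonoid * T.toAddSubmonoid ≤ (S ⬝ T).toAddSubmonoid from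
      AddSubmonoid.mul_le.2 fun _ ha _ hb => mul_mem_setMul ha hb)

open Pointwise in
theorem setMul_assoc (S T U : AddSubgroup B) : S ⬝ T ⬝ U = S ⬝ (T ⬝ U) := by
  apply AddSubgroup.toAddSubmonoid_injective
  simp only [setMul_eq_mul, AddSubgroup.mul_toAddSubmonoid, mul_assoc]

theorem setMul_top_le_of_le {S A : AddSubgroup B} (h : S ≤ A ⬝ ⊤) (T : AddSubgroup B) :
    S ⬝ T ≤ A ⬝ ⊤ :=
  calc S ⬝ T ≤ A ⬝ ⊤ ⬝ ⊤ := setMul_mono h le_top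
    _ = A ⬝ (⊤ ⬝ ⊤) := setMul_assoc _ _ _
    _ ≤ A ⬝ ⊤ := setMul_mono le_rfl le_top

theorem top_setMul_le_of_le {S A : AddSubgroup B} (h : S ≤ ⊤ ⬝ A) (T : AddSubgroup B) :
    T ⬝ S ≤ ⊤ ⬝ A :=
  calc T ⬝ S ≤ ⊤ ⬝ (⊤ ⬝ A) := setMul_mono le_top h
    _ = ⊤ ⬝ ⊤ ⬝ A := (setMul_assoc _ _ _).symm
    _ ≤ ⊤ ⬝ A := setMul_mono le_top le_rfl

def AddSubgroup.preimageOn (A U : AddSubgroup B) (f : B → B)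
    (hf : ∀ x y, x ∈ A → y ∈ A → f (x + y) = f x + f y) : AddSubgroup B :=
  let φ : A →+ B := AddMonoidHom.mk' (fun x => f x) fun x y => hf x y x.2 y.2
  { carrier := {x | x ∈ A ∧ f x ∈ U}
    add_mem' := fun ⟨hx, hfx⟩ ⟨hy, hfy⟩ =>
      ⟨add_mem hx hy, by rw [hf _ _ hx hy]; exact add_mem hfx hfy⟩
    zero_mem' := ⟨zero_mem A, by convert zero_mem U; exact map_zero φ⟩
    neg_mem' := fun {x} ⟨hx, hfx⟩ =>
      ⟨neg_mem hx, by convert neg_mem hfx; exact map_neg φ ⟨x, hx⟩⟩ }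

structure IsRightLinearOn (f : B → B) (A : AddSubgroup B) : Prop where
  map_add : ∀ x y, x ∈ A → y ∈ A → f (x + y) = f x + f y
  map_mul : ∀ x b, x ∈ A → f (x * b) = f x * b

structure IsLeftLinearOn (f : B → B) (A : AddSubgroup B) : Prop where
  map_add : ∀ x y, x ∈ A → y ∈ A → f (x + y) = f x + f y
  map_mul : ∀ x b, x ∈ A → f (b * x) = b * f x

namespace IsRightLinearOn

variable {f g : B → B} {A S S' T : AddSubgroup B}

theorem mono (hf : IsRightLinearOn f A) (h : S ≤ A) : IsRightLinearOn f S :=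
  ⟨fun x y hx hy => hf.map_add x y (h hx) (h hy), fun x b hx => hf.map_mul x b (h hx)⟩

theorem comp (hg : IsRightLinearOn g T) (hf : IsRightLinearOn f S) (h : MapsTo f S T) :
    IsRightLinearOn (g ∘ f) S where
  map_add x y hx hy := by
    simp only [Function.comp_apply, hf.map_add x y hx hy, hg.map_add _ _ (h hx) (h hy)]
  map_mul x b hx := by
    simp only [Function.comp_apply, hf.map_mul x b hx, hg.map_mul _ b (h hx)]

theorem mapsTo_setMul (hf : IsRightLinearOn f (A ⬝ ⊤)) (hS : S ≤ A ⬝ ⊤) (h : MapsTo f S S')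
    (T : AddSubgroup B) : MapsTo f (S ⬝ T) (S' ⬝ T) := fun _ hx =>
  (setMul_le (U := .preimageOn (A ⬝ ⊤) (S' ⬝ T) f hf.map_add).2
    (fun s hs t _ => ⟨setMul_top_le_of_le hS T (mul_mem_setMul hs ‹_›), by
      rw [hf.map_mul s t (hS hs)]; exact mul_mem_setMul (h hs) ‹_›⟩) hx).2

end IsRightLinearOn

namespace IsLeftLinearOn

variable {f g : B → B} {A S S' T : AddSubgroup B}

theorem mono (hf : IsLeftLinearOn f A) (h : S ≤ A) : IsLeftLinearOn f S :=
  ⟨fun x y hx hy => hf.map_add x y (h hx) (h hy), fun x b hx => hf.map_mul x b (h hx)⟩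

theorem comp (hg : IsLeftLinearOn g T) (hf : IsLeftLinearOn f S) (h : MapsTo f S T) :
    IsLeftLinearOn (g ∘ f) S where
  map_add x y hx hy := by
    simp only [Function.comp_apply, hf.map_add x y hx hy, hg.map_add _ _ (h hx) (h hy)]
  map_mul x b hx := by
    simp only [Function.comp_apply, hf.map_mul x b hx, hg.map_mul _ b (h hx)]

theorem mapsTo_setMul (hf : IsLeftLinearOn f (⊤ ⬝ A)) (hS : S ≤ ⊤ ⬝ A) (h : MapsTo f S S')
    (T : AddSubgroup B) : MapsTo f (T ⬝ S) (T ⬝ S') := fun _ hx =>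
  (setMul_le (U := .preimageOn (⊤ ⬝ A) (T ⬝ S') f hf.map_add).2
    (fun t _ s hs => ⟨top_setMul_le_of_le hS T (mul_mem_setMul ‹_› hs), by
      rw [hf.map_mul s t (hS hs)]; exact mul_mem_setMul ‹_› (h hs)⟩) hx).2

end IsLeftLinearOn

structure IsRightIsoOn (f f' : B → B) (S T : AddSubgroup B) : Prop where
  linearOn : IsRightLinearOn f S
  linearOn' : IsRightLinearOn f' T
  mapsTo : MapsTo f S T
  mapsTo' : MapsTo f' T S
  invOn : InvOn f' f S T

structure IsLeftIsoOn (f f' : B → B) (S T : AddSubgroup B) : Prop where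
  linearOn : IsLeftLinearOn f S
  linearOn' : IsLeftLinearOn f' T
  mapsTo : MapsTo f S T
  mapsTo' : MapsTo f' T S
  invOn : InvOn f' f S T

namespace IsRightIsoOn

variable {f f' g g' : B → B} {S T U S' T' : AddSubgroup B}

theorem comp (hf : IsRightIsoOn f f' S T) (hg : IsRightIsoOn g g' T U) :
    IsRightIsoOn (g ∘ f) (f' ∘ g') S U :=
  ⟨hg.linearOn.comp hf.linearOn hf.mapsTo, hf.linearOn'.comp hg.linearOn' hg.mapsTo',
    hg.mapsTo.comp hf.mapsTo, hf.mapsTo'.comp hg.mapsTo',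
    hf.invOn.comp hg.invOn hf.mapsTo hg.mapsTo'⟩

theorem symm (hf : IsRightIsoOn f f' S T) : IsRightIsoOn f' f T S :=
  ⟨hf.linearOn', hf.linearOn, hf.mapsTo', hf.mapsTo, hf.invOn.symm⟩

theorem restrict (hf : IsRightIsoOn f f' S T) (hS : S' ≤ S) (hT : T' ≤ T)
    (h : MapsTo f S' T') (h' : MapsTo f' T' S') : IsRightIsoOn f f' S' T' :=
  ⟨hf.linearOn.mono hS, hf.linearOn'.mono hT, h, h', hf.invOn.mono hS hT⟩

end IsRightIsoOn

namespace IsLeftIsoOn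

variable {f f' g g' : B → B} {S T U S' T' : AddSubgroup B}

theorem comp (hf : IsLeftIsoOn f f' S T) (hg : IsLeftIsoOn g g' T U) :
    IsLeftIsoOn (g ∘ f) (f' ∘ g') S U :=
  ⟨hg.linearOn.comp hf.linearOn hf.mapsTo, hf.linearOn'.comp hg.linearOn' hg.mapsTo',
    hg.mapsTo.comp hf.mapsTo, hf.mapsTo'.comp hg.mapsTo',
    hf.invOn.comp hg.invOn hf.mapsTo hg.mapsTo'⟩

theorem symm (hf : IsLeftIsoOn f f' S T) : IsLeftIsoOn f' f T S :=
  ⟨hf.linearOn', hf.linearOn, hf.mapsTo', hf.mapsTo, hf.invOn.symm⟩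

theorem restrict (hf : IsLeftIsoOn f f' S T) (hS : S' ≤ S) (hT : T' ≤ T)
    (h : MapsTo f S' T') (h' : MapsTo f' T' S') : IsLeftIsoOn f f' S' T' :=
  ⟨hf.linearOn.mono hS, hf.linearOn'.mono hT, h, h', hf.invOn.mono hS hT⟩

end IsLeftIsoOn

def MulCompatOn (R L : B → B) (S T : AddSubgroup B) : Prop :=
  ∀ x ∈ S, ∀ y ∈ T, R x * y = x * L y

namespace MulCompatOn

variable {R L R₁ L₁ R₂ L₂ : B → B} {S T S' T' : AddSubgroup B}

theorem mono (h : MulCompatOn R L S T) (hS : S' ≤ S) (hT : T' ≤ T) : MulCompatOn R L S' T' :=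
  fun x hx y hy => h x (hS hx) y (hT hy)

theorem comp (h₁ : MulCompatOn R₁ L₁ S T) (h₂ : MulCompatOn R₂ L₂ S' T') (hR : MapsTo R₁ S S')
    (hL : MapsTo L₂ T' T) : MulCompatOn (R₂ ∘ R₁) (L₁ ∘ L₂) S T' := fun x hx y hy => by
  simp only [Function.comp_apply, h₂ _ (hR hx) y hy, h₁ x hx _ (hL hy)]

end MulCompatOn

/-- `(L, R)` is a multiplier acting on the left of `P` and on the right of `Q`, with inverse
`(L', R')` acting on the left of `P'` and on the right of `Q'`. -/
structure IsMultiplierIsoOn (L L' R R' : B → B) (P P' Q Q' : AddSubgroup B) : Prop where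
  left : IsRightIsoOn L L' P P'
  right : IsLeftIsoOn R R' Q Q'
  compat : MulCompatOn R L Q P
  compat' : MulCompatOn R' L' Q' P'

namespace IsMultiplierIsoOn

variable {L L' R R' L₁ L₁' R₁ R₁' L₂ L₂' R₂ R₂' : B → B}
  {P P' Q Q' P₁ P₁' Q₁ Q₁' P₂ Q₂' S S' T T' : AddSubgroup B}

/-- The product `u₁ u₂` of multipliers: `L_{u₁u₂} = L_{u₁} ∘ L_{u₂}` and
`R_{u₁u₂} = R_{u₂} ∘ R_{u₁}`. -/
theorem comp (h₁ : IsMultiplierIsoOn L₁ L₁' R₁ R₁' P₁ P₁' Q₁ Q₁')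
    (h₂ : IsMultiplierIsoOn L₂ L₂' R₂ R₂' P₂ P₁ Q₁' Q₂') :
    IsMultiplierIsoOn (L₁ ∘ L₂) (L₂' ∘ L₁') (R₂ ∘ R₁) (R₁' ∘ R₂') P₂ P₁' Q₁ Q₂' :=
  ⟨h₂.left.comp h₁.left, h₁.right.comp h₂.right,
    h₁.compat.comp h₂.compat h₁.right.mapsTo h₂.left.mapsTo,
    h₂.compat'.comp h₁.compat' h₂.right.mapsTo' h₁.left.mapsTo'⟩

theorem symm (h : IsMultiplierIsoOn L L' R R' P P' Q Q') :
    IsMultiplierIsoOn L' L R' R P' P Q' Q :=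
  ⟨h.left.symm, h.right.symm, h.compat', h.compat⟩

theorem restrict (h : IsMultiplierIsoOn L L' R R' P P' Q Q') (hP : S ≤ P) (hP' : S' ≤ P')
    (hQ : T ≤ Q) (hQ' : T' ≤ Q') (hL : MapsTo L S S') (hL' : MapsTo L' S' S)
    (hR : MapsTo R T T') (hR' : MapsTo R' T' T) : IsMultiplierIsoOn L L' R R' S S' T T' :=
  ⟨h.left.restrict hP hP' hL hL', h.right.restrict hQ hQ' hR hR',
    h.compat.mono hQ hP, h.compat'.mono hQ' hP'⟩

end IsMultiplierIsoOn

structure IsSymmetricallyGraded (Bc : G → AddSubgroup B) : Prop where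
  mul_mem : ∀ (g h : G) (x y : B), x ∈ Bc g → y ∈ Bc h → x * y ∈ Bc (g * h)
  setMul_setMul_eq : ∀ g : G, Bc g ⬝ Bc g⁻¹ ⬝ Bc g = Bc g

namespace IsSymmetricallyGraded

variable {Bc : G → AddSubgroup B}

theorem setMul_le_of_mul_eq (hB : IsSymmetricallyGraded Bc) {a b c : G} (h : a * b = c) :
    Bc a ⬝ Bc b ≤ Bc c :=
  setMul_le.2 fun _ hx _ hy => h ▸ hB.mul_mem a b _ _ hx hy

theorem setMul_setMul_le_of_mul_mul_eq (hB : IsSymmetricallyGraded Bc) {a b c d : G}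
    (h : a * b * c = d) : Bc a ⬝ Bc b ⬝ Bc c ≤ Bc d :=
  (setMul_mono (hB.setMul_le_of_mul_eq rfl) le_rfl).trans (hB.setMul_le_of_mul_eq h)

theorem setMul_setMul_le_setMul_of_mul_eq (hB : IsSymmetricallyGraded Bc) (S : AddSubgroup B)
    {a b c : G} (h : a * b = c) : S ⬝ Bc a ⬝ Bc b ≤ S ⬝ Bc c := by
  rw [setMul_assoc]
  exact setMul_mono le_rfl (hB.setMul_le_of_mul_eq h)

theorem setMul_setMul_setMul_eq (hB : IsSymmetricallyGraded Bc) (S : AddSubgroup B) (g : G) :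
    S ⬝ Bc g ⬝ Bc g⁻¹ ⬝ Bc g = S ⬝ Bc g := by
  rw [setMul_assoc, setMul_assoc, ← setMul_assoc (Bc g), hB.setMul_setMul_eq]

theorem setMul_setMul_setMul_eq_inv (hB : IsSymmetricallyGraded Bc) (S : AddSubgroup B) (g : G) :
    S ⬝ Bc g⁻¹ ⬝ Bc g ⬝ Bc g⁻¹ = S ⬝ Bc g⁻¹ := by
  simpa using hB.setMul_setMul_setMul_eq S g⁻¹

theorem le_setMul_top (hB : IsSymmetricallyGraded Bc) (g : G) : Bc g ≤ Bc g ⬝ ⊤ :=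
  calc Bc g = Bc g ⬝ (Bc g⁻¹ ⬝ Bc g) := by rw [← setMul_assoc, hB.setMul_setMul_eq]
    _ ≤ Bc g ⬝ ⊤ := setMul_mono le_rfl le_top

theorem le_top_setMul (hB : IsSymmetricallyGraded Bc) (g : G) : Bc g ≤ ⊤ ⬝ Bc g :=
  calc Bc g = Bc g ⬝ Bc g⁻¹ ⬝ Bc g := (hB.setMul_setMul_eq g).symm
    _ ≤ ⊤ ⬝ Bc g := setMul_mono le_top le_rfl

theorem corner_setMul_corner_le (hB : IsSymmetricallyGraded Bc) {g h k : G} (hk : g * h = k) :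
    Bc g ⬝ Bc g⁻¹ ⬝ (Bc k ⬝ Bc k⁻¹) ≤ Bc g ⬝ Bc h ⬝ Bc k⁻¹ :=
  calc _ = Bc g ⬝ (Bc g⁻¹ ⬝ Bc k) ⬝ Bc k⁻¹ := by simp only [setMul_assoc]
    _ ≤ _ := by gcongr; exact hB.setMul_le_of_mul_eq (by rw [← hk]; group)

theorem setMul_le_corner_setMul (hB : IsSymmetricallyGraded Bc) {g h k : G} (hk : g * h = k) :
    Bc g ⬝ Bc h ≤ Bc g ⬝ Bc g⁻¹ ⬝ Bc k :=
  calc Bc g ⬝ Bc h = Bc g ⬝ Bc g⁻¹ ⬝ Bc g ⬝ Bc h := by rw [hB.setMul_setMul_eq]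
    _ ≤ _ := hB.setMul_setMul_le_setMul_of_mul_eq _ hk

theorem corner_setMul_corner_le_setMul_inv (hB : IsSymmetricallyGraded Bc) {g h k : G}
    (hk : g * h = k) : Bc g ⬝ Bc g⁻¹ ⬝ (Bc k ⬝ Bc k⁻¹) ≤ Bc g ⬝ Bc h ⬝ Bc h⁻¹ ⬝ Bc g⁻¹ :=
  calc _ ≤ Bc g ⬝ Bc h ⬝ Bc k⁻¹ := hB.corner_setMul_corner_le hk
    _ = Bc g ⬝ Bc h ⬝ Bc h⁻¹ ⬝ (Bc h ⬝ Bc k⁻¹) := by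
      rw [← setMul_assoc, hB.setMul_setMul_setMul_eq]
    _ ≤ _ := by gcongr; exact hB.setMul_le_of_mul_eq (by rw [← hk]; group)

theorem setMul_le_corner_setMul_corner_setMul (hB : IsSymmetricallyGraded Bc) {g h k : G}
    (hk : g * h = k) : Bc g ⬝ Bc h ⬝ Bc h⁻¹ ≤ Bc g ⬝ Bc g⁻¹ ⬝ (Bc k ⬝ Bc k⁻¹) ⬝ Bc g :=
  calc _ ≤ Bc g ⬝ Bc g⁻¹ ⬝ Bc k ⬝ Bc h⁻¹ := by
        gcongr ?_ ⬝ _; exact hB.setMul_le_corner_setMul hk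
    _ = Bc g ⬝ Bc g⁻¹ ⬝ (Bc k ⬝ Bc k⁻¹) ⬝ (Bc k ⬝ Bc h⁻¹) := by
      rw [← hB.setMul_setMul_setMul_eq (Bc g ⬝ Bc g⁻¹) k]; simp only [← setMul_assoc]
    _ ≤ _ := by gcongr; exact hB.setMul_le_of_mul_eq (by rw [← hk]; group)

theorem setMul_le_setMul_corner_setMul_corner (hB : IsSymmetricallyGraded Bc) {g h k : G}
    (hk : g * h = k) : Bc h⁻¹ ⬝ Bc h ⬝ Bc k⁻¹ ≤ Bc k⁻¹ ⬝ (Bc g ⬝ Bc g⁻¹ ⬝ (Bc k ⬝ Bc k⁻¹)) :=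
  calc _ = Bc h⁻¹ ⬝ Bc h ⬝ Bc k⁻¹ ⬝ Bc k ⬝ Bc k⁻¹ :=
        (hB.setMul_setMul_setMul_eq_inv _ k).symm
    _ ≤ Bc h⁻¹ ⬝ Bc g⁻¹ ⬝ Bc k ⬝ Bc k⁻¹ := by
      gcongr ?_ ⬝ _ ⬝ _
      exact hB.setMul_setMul_le_setMul_of_mul_eq _ (by rw [← hk]; group)
    _ = Bc h⁻¹ ⬝ Bc g⁻¹ ⬝ Bc g ⬝ Bc g⁻¹ ⬝ Bc k ⬝ Bc k⁻¹ := by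
      rw [hB.setMul_setMul_setMul_eq_inv]
    _ ≤ Bc k⁻¹ ⬝ Bc g ⬝ Bc g⁻¹ ⬝ Bc k ⬝ Bc k⁻¹ := by
      gcongr; exact hB.setMul_le_of_mul_eq (by rw [← hk]; group)
    _ = _ := by simp only [← setMul_assoc]

theorem corner_setMul_corner_le_setMul (hB : IsSymmetricallyGraded Bc) {g h k : G}
    (hk : g * h = k) : Bc g ⬝ Bc g⁻¹ ⬝ (Bc k ⬝ Bc k⁻¹) ≤ Bc k ⬝ (Bc h⁻¹ ⬝ Bc h ⬝ Bc k⁻¹) :=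
  calc _ ≤ Bc g ⬝ Bc h ⬝ Bc k⁻¹ := hB.corner_setMul_corner_le hk
    _ = Bc g ⬝ Bc h ⬝ Bc h⁻¹ ⬝ Bc h ⬝ Bc k⁻¹ := by rw [hB.setMul_setMul_setMul_eq]
    _ ≤ Bc k ⬝ Bc h⁻¹ ⬝ Bc h ⬝ Bc k⁻¹ := by gcongr; exact hB.setMul_le_of_mul_eq hk
    _ = _ := by simp only [← setMul_assoc]

end IsSymmetricallyGraded

namespace IsMultiplierIsoOn

variable {Bc : G → AddSubgroup B} {Lu Lv Ru Rv : B → B}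

theorem restrict_setMul (hB : IsSymmetricallyGraded Bc) {h : G}
    (hu : IsMultiplierIsoOn Lu Lv Ru Rv (Bc h⁻¹ ⬝ ⊤) (Bc h ⬝ ⊤) (⊤ ⬝ Bc h⁻¹) (⊤ ⬝ Bc h))
    (hLu : MapsTo Lu (Bc h⁻¹ ⬝ Bc h) (Bc h)) (hLv : MapsTo Lv (Bc h) (Bc h⁻¹ ⬝ Bc h))
    (hRu : MapsTo Ru (Bc h⁻¹) (Bc h⁻¹ ⬝ Bc h)) (hRv : MapsTo Rv (Bc h) (Bc h ⬝ Bc h⁻¹))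
    (S T : AddSubgroup B) :
    IsMultiplierIsoOn Lu Lv Ru Rv (Bc h⁻¹ ⬝ Bc h ⬝ T) (Bc h ⬝ T) (S ⬝ Bc h ⬝ Bc h⁻¹) (S ⬝ Bc h) :=
  have hD : Bc h⁻¹ ⬝ Bc h ≤ Bc h⁻¹ ⬝ ⊤ := setMul_mono le_rfl le_top
  hu.restrict (setMul_top_le_of_le hD T) (setMul_mono le_rfl le_top)
    (setMul_mono le_top le_rfl) (setMul_mono le_top le_rfl)
    (hu.left.linearOn.mapsTo_setMul hD hLu T)
    (hu.left.linearOn'.mapsTo_setMul (hB.le_setMul_top h) hLv T)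
    ((hu.right.linearOn.mapsTo_setMul (hB.le_top_setMul h⁻¹) hRu _).mono_right
      (by rw [← setMul_assoc, hB.setMul_setMul_setMul_eq]))
    ((hu.right.linearOn'.mapsTo_setMul (hB.le_top_setMul h) hRv _).mono_right
      (by rw [← setMul_assoc]))

theorem restrict_twist_left (hB : IsSymmetricallyGraded Bc) {g h k : G} (hk : g * h = k)
    (hu : IsMultiplierIsoOn Lu Lv Ru Rv (Bc g⁻¹ ⬝ ⊤) (Bc g ⬝ ⊤) (⊤ ⬝ Bc g⁻¹) (⊤ ⬝ Bc g))
    (hLu : MapsTo Lu (Bc g⁻¹) (Bc g ⬝ Bc g⁻¹)) (hLv : MapsTo Lv (Bc g ⬝ Bc g⁻¹) (Bc g⁻¹))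
    (hRu : MapsTo Ru (Bc g⁻¹) (Bc g⁻¹ ⬝ Bc g)) (hRv : MapsTo Rv (Bc g) (Bc g ⬝ Bc g⁻¹)) :
    IsMultiplierIsoOn Lu Lv Ru Rv (Bc h ⬝ Bc k⁻¹) (Bc g ⬝ Bc g⁻¹ ⬝ (Bc k ⬝ Bc k⁻¹))
      (Bc g ⬝ Bc g⁻¹ ⬝ (Bc k ⬝ Bc k⁻¹)) (Bc g ⬝ Bc h ⬝ Bc h⁻¹) := by
  have hhk : h * k⁻¹ = g⁻¹ := by rw [← hk]; group
  have hX : Bc h ⬝ Bc k⁻¹ ≤ Bc g⁻¹ ⬝ (Bc k ⬝ Bc k⁻¹) :=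
    calc Bc h ⬝ Bc k⁻¹ = Bc h ⬝ Bc k⁻¹ ⬝ Bc k ⬝ Bc k⁻¹ := (hB.setMul_setMul_setMul_eq_inv _ k).symm
      _ ≤ Bc g⁻¹ ⬝ Bc k ⬝ Bc k⁻¹ := by gcongr; exact hB.setMul_le_of_mul_eq hhk
      _ = _ := setMul_assoc _ _ _
  have hX' : Bc g⁻¹ ⬝ (Bc k ⬝ Bc k⁻¹) ≤ Bc h ⬝ Bc k⁻¹ := by
    rw [← setMul_assoc]; gcongr; exact hB.setMul_le_of_mul_eq (by rw [← hk]; group)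
  have hY := hB.corner_setMul_corner_le_setMul_inv hk
  have hZ := hB.setMul_le_corner_setMul_corner_setMul hk
  have hY' : Bc g ⬝ Bc h ⬝ Bc h⁻¹ ⬝ (Bc g⁻¹ ⬝ Bc g) ≤ Bc g ⬝ Bc h ⬝ Bc h⁻¹ :=
    calc _ = Bc g ⬝ Bc h ⬝ (Bc h⁻¹ ⬝ Bc g⁻¹ ⬝ Bc g) := by simp only [← setMul_assoc]
      _ ≤ _ := by gcongr; exact hB.setMul_setMul_le_of_mul_mul_eq (by group)
  have hZ' : Bc g ⬝ Bc g⁻¹ ⬝ (Bc k ⬝ Bc k⁻¹) ⬝ (Bc g ⬝ Bc g⁻¹) ≤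
      Bc g ⬝ Bc g⁻¹ ⬝ (Bc k ⬝ Bc k⁻¹) :=
    calc _ = Bc g ⬝ Bc g⁻¹ ⬝ Bc k ⬝ (Bc k⁻¹ ⬝ Bc g ⬝ Bc g⁻¹) := by simp only [← setMul_assoc]
      _ ≤ Bc g ⬝ Bc g⁻¹ ⬝ Bc k ⬝ Bc k⁻¹ := by
        gcongr; exact hB.setMul_setMul_le_of_mul_mul_eq (by group)
      _ = _ := setMul_assoc _ _ _
  exact hu.restrict (hX.trans (setMul_mono le_rfl le_top))
    (setMul_top_le_of_le (setMul_mono le_rfl le_top) _) (hY.trans (setMul_mono le_top le_rfl))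
    (hZ.trans (setMul_mono le_top le_rfl))
    ((hu.left.linearOn.mapsTo_setMul (hB.le_setMul_top _) hLu _).mono_left hX)
    ((hu.left.linearOn'.mapsTo_setMul (setMul_mono le_rfl le_top) hLv _).mono_right hX')
    (((hu.right.linearOn.mapsTo_setMul (hB.le_top_setMul _) hRu _).mono_left hY).mono_right hY')
    (((hu.right.linearOn'.mapsTo_setMul (hB.le_top_setMul _) hRv _).mono_left hZ).mono_right hZ')

theorem restrict_twist_right (hB : IsSymmetricallyGraded Bc) {g h k : G} (hk : g * h = k)
    (hu : IsMultiplierIsoOn Lu Lv Ru Rv (Bc k⁻¹ ⬝ ⊤) (Bc k ⬝ ⊤) (⊤ ⬝ Bc k⁻¹) (⊤ ⬝ Bc k))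
    (hLu : MapsTo Lu (Bc k⁻¹) (Bc k ⬝ Bc k⁻¹)) (hLv : MapsTo Lv (Bc k) (Bc k⁻¹ ⬝ Bc k))
    (hRu : MapsTo Ru (Bc k⁻¹) (Bc k⁻¹ ⬝ Bc k)) (hRv : MapsTo Rv (Bc k) (Bc k ⬝ Bc k⁻¹)) :
    IsMultiplierIsoOn Lu Lv Ru Rv (Bc h⁻¹ ⬝ Bc h ⬝ Bc k⁻¹) (Bc g ⬝ Bc g⁻¹ ⬝ (Bc k ⬝ Bc k⁻¹))
      (Bc g ⬝ Bc g⁻¹ ⬝ (Bc k ⬝ Bc k⁻¹)) (Bc g ⬝ Bc h) := by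
  have hX := hB.setMul_le_setMul_corner_setMul_corner hk
  have hD := hB.corner_setMul_corner_le_setMul hk
  have hX' : Bc k ⬝ Bc k⁻¹ ⬝ (Bc g ⬝ Bc g⁻¹ ⬝ (Bc k ⬝ Bc k⁻¹)) ≤
      Bc g ⬝ Bc g⁻¹ ⬝ (Bc k ⬝ Bc k⁻¹) :=
    calc _ = Bc k ⬝ Bc k⁻¹ ⬝ Bc g ⬝ Bc g⁻¹ ⬝ Bc k ⬝ Bc k⁻¹ := by simp only [← setMul_assoc]
      _ ≤ Bc g ⬝ Bc g⁻¹ ⬝ Bc k ⬝ Bc k⁻¹ := by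
        gcongr; exact hB.setMul_setMul_le_of_mul_mul_eq (by group)
      _ = _ := setMul_assoc _ _ _
  have hD' : Bc k⁻¹ ⬝ Bc k ⬝ (Bc h⁻¹ ⬝ Bc h ⬝ Bc k⁻¹) ≤ Bc h⁻¹ ⬝ Bc h ⬝ Bc k⁻¹ :=
    calc _ = Bc k⁻¹ ⬝ Bc k ⬝ Bc h⁻¹ ⬝ Bc h ⬝ Bc k⁻¹ := by simp only [← setMul_assoc]
      _ ≤ _ := by gcongr; exact hB.setMul_setMul_le_of_mul_mul_eq (by group)
  have hY : Bc g ⬝ Bc g⁻¹ ⬝ (Bc k ⬝ Bc k⁻¹) ≤ Bc g ⬝ Bc h ⬝ Bc k⁻¹ :=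
    hB.corner_setMul_corner_le hk
  have hY' : Bc g ⬝ Bc h ⬝ (Bc k⁻¹ ⬝ Bc k) ≤ Bc g ⬝ Bc h :=
    calc _ = Bc g ⬝ (Bc h ⬝ Bc k⁻¹ ⬝ Bc k) := by simp only [← setMul_assoc]
      _ ≤ _ := by gcongr; exact hB.setMul_setMul_le_of_mul_mul_eq (by group)
  have hZ : Bc g ⬝ Bc h ≤ Bc g ⬝ Bc g⁻¹ ⬝ Bc k := hB.setMul_le_corner_setMul hk
  exact hu.restrict (hX.trans (setMul_mono le_rfl le_top))
    (hD.trans (setMul_mono le_rfl le_top)) (hY.trans (setMul_mono le_top le_rfl))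
    (hZ.trans (setMul_mono le_top le_rfl))
    (((hu.left.linearOn.mapsTo_setMul (hB.le_setMul_top _) hLu _).mono_left hX).mono_right hX')
    (((hu.left.linearOn'.mapsTo_setMul (hB.le_setMul_top _) hLv _).mono_left hD).mono_right hD')
    (((hu.right.linearOn.mapsTo_setMul (hB.le_top_setMul _) hRu _).mono_left hY).mono_right hY')
    ((hu.right.linearOn'.mapsTo_setMul (hB.le_top_setMul _) hRv _).mono_left hZ)

end IsMultiplierIsoOn

theorem twisting_is_multiplier_general {G : Type} [Group G]
    {B : Type} [NonUnitalRing B]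
    (Bc : G → AddSubgroup B)
    (hgrmul : ∀ (g h : G) (x y : B), x ∈ Bc g → y ∈ Bc h → x * y ∈ Bc (g * h))
    (hpr : ∀ g : G, setMul (setMul (Bc g) (Bc g⁻¹)) (Bc g) = Bc g)
    (Lu Lv Ru Rv : G → B → B)
    -- the extended maps from Lemma 5.1 attached to the multipliers `u_g, v_g`:
    (hLu_mem : ∀ g, ∀ x ∈ setMul (Bc g⁻¹) ⊤, Lu g x ∈ setMul (Bc g) ⊤)
    (hLv_mem : ∀ g, ∀ x ∈ setMul (Bc g) ⊤, Lv g x ∈ setMul (Bc g⁻¹) ⊤)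
    (hRu_mem : ∀ g, ∀ x ∈ setMul ⊤ (Bc g⁻¹), Ru g x ∈ setMul ⊤ (Bc g))
    (hRv_mem : ∀ g, ∀ x ∈ setMul ⊤ (Bc g), Rv g x ∈ setMul ⊤ (Bc g⁻¹))
    (hLu_add : ∀ g x y, x ∈ setMul (Bc g⁻¹) ⊤ → y ∈ setMul (Bc g⁻¹) ⊤ →
      Lu g (x + y) = Lu g x + Lu g y)
    (hLv_add : ∀ g x y, x ∈ setMul (Bc g) ⊤ → y ∈ setMul (Bc g) ⊤ →
      Lv g (x + y) = Lv g x + Lv g y)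
    (hRu_add : ∀ g x y, x ∈ setMul ⊤ (Bc g⁻¹) → y ∈ setMul ⊤ (Bc g⁻¹) →
      Ru g (x + y) = Ru g x + Ru g y)
    (hRv_add : ∀ g x y, x ∈ setMul ⊤ (Bc g) → y ∈ setMul ⊤ (Bc g) →
      Rv g (x + y) = Rv g x + Rv g y)
    (hLu_lin : ∀ g x b, x ∈ setMul (Bc g⁻¹) ⊤ → Lu g (x * b) = Lu g x * b)
    (hLv_lin : ∀ g x b, x ∈ setMul (Bc g) ⊤ → Lv g (x * b) = Lv g x * b)
    (hRu_lin : ∀ g x b, x ∈ setMul ⊤ (Bc g⁻¹) → Ru g (b * x) = b * Ru g x)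
    (hRv_lin : ∀ g x b, x ∈ setMul ⊤ (Bc g) → Rv g (b * x) = b * Rv g x)
    (hLuLv : ∀ g, ∀ x ∈ setMul (Bc g⁻¹) ⊤, Lv g (Lu g x) = x)
    (hLvLu : ∀ g, ∀ x ∈ setMul (Bc g) ⊤, Lu g (Lv g x) = x)
    (hRuRv : ∀ g, ∀ x ∈ setMul ⊤ (Bc g⁻¹), Rv g (Ru g x) = x)
    (hRvRu : ∀ g, ∀ x ∈ setMul ⊤ (Bc g), Ru g (Rv g x) = x)
    (hLu_piece₁ : ∀ g, ∀ x ∈ Bc g⁻¹, Lu g x ∈ setMul (Bc g) (Bc g⁻¹))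
    (hLu_piece₂ : ∀ g, ∀ x ∈ setMul (Bc g⁻¹) (Bc g), Lu g x ∈ Bc g)
    (hLv_piece₁ : ∀ g, ∀ x ∈ Bc g, Lv g x ∈ setMul (Bc g⁻¹) (Bc g))
    (hLv_piece₂ : ∀ g, ∀ x ∈ setMul (Bc g) (Bc g⁻¹), Lv g x ∈ Bc g⁻¹)
    (hRu_piece₂ : ∀ g, ∀ x ∈ Bc g⁻¹, Ru g x ∈ setMul (Bc g⁻¹) (Bc g))
    (hRv_piece₁ : ∀ g, ∀ x ∈ Bc g, Rv g x ∈ setMul (Bc g) (Bc g⁻¹))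
    (hu_compat : ∀ g, ∀ x ∈ setMul ⊤ (Bc g⁻¹), ∀ y ∈ setMul (Bc g⁻¹) ⊤,
      Ru g x * y = x * Lu g y)
    (hv_compat : ∀ g, ∀ x ∈ setMul ⊤ (Bc g), ∀ y ∈ setMul (Bc g) ⊤,
      Rv g x * y = x * Lv g y)
    (g h : G) :
    -- `w_{g,h} = u_g u_h v_{gh}` is an invertible multiplier of `D_g·D_{gh}`
    -- with inverse `u_{gh} v_h v_g`:
    (let Dgh := setMul (setMul (Bc g) (Bc g⁻¹)) (setMul (Bc (g*h)) (Bc (g*h)⁻¹))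
     let wLf : B → B := fun x => Lu g (Lu h (Lv (g*h) x))
     let wRf : B → B := fun x => Rv (g*h) (Ru h (Ru g x))
     let wLi : B → B := fun x => Lu (g*h) (Lv h (Lv g x))
     let wRi : B → B := fun x => Rv g (Rv h (Ru (g*h) x))
     (∀ x ∈ Dgh, wLf x ∈ Dgh ∧ wRf x ∈ Dgh ∧ wLi x ∈ Dgh ∧ wRi x ∈ Dgh) ∧
     (∀ x y, x ∈ Dgh → y ∈ Dgh →
        wLf (x + y) = wLf x + wLf y ∧ wRf (x + y) = wRf x + wRf y ∧
        wLi (x + y) = wLi x + wLi y ∧ wRi (x + y) = wRi x + wRi y) ∧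
     (∀ x y, x ∈ Dgh → y ∈ Dgh →
        wLf (x * y) = wLf x * y ∧ wRf (x * y) = x * wRf y ∧ wRf x * y = x * wLf y) ∧
     (∀ x y, x ∈ Dgh → y ∈ Dgh →
        wLi (x * y) = wLi x * y ∧ wRi (x * y) = x * wRi y ∧ wRi x * y = x * wLi y) ∧
     (∀ x ∈ Dgh, wLi (wLf x) = x ∧ wLf (wLi x) = x ∧ wRi (wRf x) = x ∧ wRf (wRi x) = x)) := by
  intro Dgh wLf wRf wLi wRi
  have hB : IsSymmetricallyGraded Bc := ⟨hgrmul, hpr⟩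
  have hu σ : IsMultiplierIsoOn (Lu σ) (Lv σ) (Ru σ) (Rv σ)
      (Bc σ⁻¹ ⬝ ⊤) (Bc σ ⬝ ⊤) (⊤ ⬝ Bc σ⁻¹) (⊤ ⬝ Bc σ) :=
    ⟨⟨⟨hLu_add σ, hLu_lin σ⟩, ⟨hLv_add σ, hLv_lin σ⟩, hLu_mem σ, hLv_mem σ, hLuLv σ, hLvLu σ⟩,
      ⟨⟨hRu_add σ, hRu_lin σ⟩, ⟨hRv_add σ, hRv_lin σ⟩, hRu_mem σ, hRv_mem σ, hRuRv σ, hRvRu σ⟩,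
      hu_compat σ, hv_compat σ⟩
  have hug := (hu g).restrict_twist_left hB (h := h) rfl (hLu_piece₁ g) (hLv_piece₂ g)
    (hRu_piece₂ g) (hRv_piece₁ g)
  have huh := (hu h).restrict_setMul hB (hLu_piece₂ h) (hLv_piece₁ h) (hRu_piece₂ h)
    (hRv_piece₁ h) (Bc g) (Bc (g * h)⁻¹)
  have hugh := (hu (g * h)).restrict_twist_right hB (g := g) (h := h) rfl (hLu_piece₁ _)
    (hLv_piece₁ _) (hRu_piece₂ _) (hRv_piece₁ _)
  have hw : IsMultiplierIsoOn wLf wLi wRf wRi Dgh Dgh Dgh Dgh := (hug.comp huh).comp hugh.symm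
  obtain ⟨⟨hL, hL', hLD, hL'D, hLinv⟩, ⟨hR, hR', hRD, hR'D, hRinv⟩, hcompat, hcompat'⟩ := hw
  exact ⟨fun x hx => ⟨hLD hx, hRD hx, hL'D hx, hR'D hx⟩,
    fun x y hx hy => ⟨hL.map_add x y hx hy, hR.map_add x y hx hy, hL'.map_add x y hx hy,
      hR'.map_add x y hx hy⟩,
    fun x y hx hy => ⟨hL.map_mul x y hx, hR.map_mul y x hy, hcompat x hx y hy⟩,
    fun x y hx hy => ⟨hL'.map_mul x y hx, hR'.map_mul y x hy, hcompat' x hx y hy⟩,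
    fun x hx => ⟨hLinv.1 hx, hLinv.2 hx, hRinv.1 hx, hRinv.2 hx⟩⟩

/-- STATEMENT 17, Proposition 5.5: let `B = ⊕_g B_g` be homogeneously
non-degenerate with `B_g B_{g⁻¹} B_g = B_g`, and let `u_g, v_g` be multipliers
of `C_g` with `u_g v_g = e₁₁`, `v_g u_g = e₂₂`, with extensions (Lemma 5.1)
`Lu g : B_{g⁻¹}B → B_gB`, `Lv g` its inverse (right `B`-module isomorphisms)
and `Ru g : BB_{g⁻¹} → BB_g`, `Rv g` its inverse (left `B`-module
isomorphisms), restricting to `B_{g⁻¹} ↔ D_g` and `D_{g⁻¹} ↔ B_g` and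
satisfying the multiplier compatibility `(x u_g)y = x(u_g y)`.
Then `w_{g,h} = u_g u_h v_{gh}` is an invertible multiplier of `D_g·D_{gh}`
with inverse `w_{g,h}⁻¹ = u_{gh} v_h v_g`. -/
theorem twisting_is_multiplier {G : Type} [Group G] [DecidableEq G]
    {B : Type} [NonUnitalRing B]
    (Bc : G → AddSubgroup B)
    (hdir : DirectSum.IsInternal Bc)
    (hgrmul : ∀ (g h : G) (x y : B), x ∈ Bc g → y ∈ Bc h → x * y ∈ Bc (g * h))
    (hnd : ∀ (g : G) (x : B), x ∈ Bc g → x ≠ 0 →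
      (∃ y ∈ Bc g⁻¹, x * y ≠ 0) ∧ (∃ y ∈ Bc g⁻¹, y * x ≠ 0))
    (hpr : ∀ g : G, setMul (setMul (Bc g) (Bc g⁻¹)) (Bc g) = Bc g)
    (Lu Lv Ru Rv : G → B → B)
    -- the extended maps from Lemma 5.1 attached to the multipliers `u_g, v_g`:
    (hLu_mem : ∀ g, ∀ x ∈ setMul (Bc g⁻¹) ⊤, Lu g x ∈ setMul (Bc g) ⊤)
    (hLv_mem : ∀ g, ∀ x ∈ setMul (Bc g) ⊤, Lv g x ∈ setMul (Bc g⁻¹) ⊤)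
    (hRu_mem : ∀ g, ∀ x ∈ setMul ⊤ (Bc g⁻¹), Ru g x ∈ setMul ⊤ (Bc g))
    (hRv_mem : ∀ g, ∀ x ∈ setMul ⊤ (Bc g), Rv g x ∈ setMul ⊤ (Bc g⁻¹))
    (hLu_add : ∀ g x y, x ∈ setMul (Bc g⁻¹) ⊤ → y ∈ setMul (Bc g⁻¹) ⊤ →
      Lu g (x + y) = Lu g x + Lu g y)
    (hLv_add : ∀ g x y, x ∈ setMul (Bc g) ⊤ → y ∈ setMul (Bc g) ⊤ →
      Lv g (x + y) = Lv g x + Lv g y)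
    (hRu_add : ∀ g x y, x ∈ setMul ⊤ (Bc g⁻¹) → y ∈ setMul ⊤ (Bc g⁻¹) →
      Ru g (x + y) = Ru g x + Ru g y)
    (hRv_add : ∀ g x y, x ∈ setMul ⊤ (Bc g) → y ∈ setMul ⊤ (Bc g) →
      Rv g (x + y) = Rv g x + Rv g y)
    (hLu_lin : ∀ g x b, x ∈ setMul (Bc g⁻¹) ⊤ → Lu g (x * b) = Lu g x * b)
    (hLv_lin : ∀ g x b, x ∈ setMul (Bc g) ⊤ → Lv g (x * b) = Lv g x * b)
    (hRu_lin : ∀ g x b, x ∈ setMul ⊤ (Bc g⁻¹) → Ru g (b * x) = b * Ru g x)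
    (hRv_lin : ∀ g x b, x ∈ setMul ⊤ (Bc g) → Rv g (b * x) = b * Rv g x)
    (hLuLv : ∀ g, ∀ x ∈ setMul (Bc g⁻¹) ⊤, Lv g (Lu g x) = x)
    (hLvLu : ∀ g, ∀ x ∈ setMul (Bc g) ⊤, Lu g (Lv g x) = x)
    (hRuRv : ∀ g, ∀ x ∈ setMul ⊤ (Bc g⁻¹), Rv g (Ru g x) = x)
    (hRvRu : ∀ g, ∀ x ∈ setMul ⊤ (Bc g), Ru g (Rv g x) = x)
    (hLu_piece₁ : ∀ g, ∀ x ∈ Bc g⁻¹, Lu g x ∈ setMul (Bc g) (Bc g⁻¹))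
    (hLu_piece₂ : ∀ g, ∀ x ∈ setMul (Bc g⁻¹) (Bc g), Lu g x ∈ Bc g)
    (hLv_piece₁ : ∀ g, ∀ x ∈ Bc g, Lv g x ∈ setMul (Bc g⁻¹) (Bc g))
    (hLv_piece₂ : ∀ g, ∀ x ∈ setMul (Bc g) (Bc g⁻¹), Lv g x ∈ Bc g⁻¹)
    (hRu_piece₁ : ∀ g, ∀ x ∈ setMul (Bc g) (Bc g⁻¹), Ru g x ∈ Bc g)
    (hRu_piece₂ : ∀ g, ∀ x ∈ Bc g⁻¹, Ru g x ∈ setMul (Bc g⁻¹) (Bc g))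
    (hRv_piece₁ : ∀ g, ∀ x ∈ Bc g, Rv g x ∈ setMul (Bc g) (Bc g⁻¹))
    (hRv_piece₂ : ∀ g, ∀ x ∈ setMul (Bc g⁻¹) (Bc g), Rv g x ∈ Bc g⁻¹)
    (u v : ∀ g : G, LinkMult Bc g)
    (huv : ∀ g : G, CornerUVg Bc g (u g) (v g))
    -- the extended maps restrict to the actions of the multipliers `u_g, v_g`:
    (hLu_u : ∀ g, ∀ x ∈ Bc g⁻¹, Lu g x = ((u g).L !![0, 0; x, 0]) 0 0)
    (hLu_u' : ∀ g, ∀ x ∈ setMul (Bc g⁻¹) (Bc g), Lu g x = ((u g).L !![0, 0; 0, x]) 0 1)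
    (hLv_v : ∀ g, ∀ x ∈ Bc g, Lv g x = ((v g).L !![0, x; 0, 0]) 1 1)
    (hLv_v' : ∀ g, ∀ x ∈ setMul (Bc g) (Bc g⁻¹), Lv g x = ((v g).L !![x, 0; 0, 0]) 1 0)
    (hRu_u : ∀ g, ∀ x ∈ setMul (Bc g) (Bc g⁻¹), Ru g x = ((u g).Rm !![x, 0; 0, 0]) 0 1)
    (hRu_u' : ∀ g, ∀ x ∈ Bc g⁻¹, Ru g x = ((u g).Rm !![0, 0; x, 0]) 1 1)
    (hRv_v : ∀ g, ∀ x ∈ Bc g, Rv g x = ((v g).Rm !![0, x; 0, 0]) 0 0)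
    (hRv_v' : ∀ g, ∀ x ∈ setMul (Bc g⁻¹) (Bc g), Rv g x = ((v g).Rm !![0, 0; 0, x]) 1 0)
    (hu_compat : ∀ g, ∀ x ∈ setMul ⊤ (Bc g⁻¹), ∀ y ∈ setMul (Bc g⁻¹) ⊤,
      Ru g x * y = x * Lu g y)
    (hv_compat : ∀ g, ∀ x ∈ setMul ⊤ (Bc g), ∀ y ∈ setMul (Bc g) ⊤,
      Rv g x * y = x * Lv g y)
    (g h : G) :
    -- `w_{g,h} = u_g u_h v_{gh}` is an invertible multiplier of `D_g·D_{gh}`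
    -- with inverse `u_{gh} v_h v_g`:
    (let Dgh := setMul (setMul (Bc g) (Bc g⁻¹)) (setMul (Bc (g*h)) (Bc (g*h)⁻¹))
     let wLf : B → B := fun x => Lu g (Lu h (Lv (g*h) x))
     let wRf : B → B := fun x => Rv (g*h) (Ru h (Ru g x))
     let wLi : B → B := fun x => Lu (g*h) (Lv h (Lv g x))
     let wRi : B → B := fun x => Rv g (Rv h (Ru (g*h) x))
     (∀ x ∈ Dgh, wLf x ∈ Dgh ∧ wRf x ∈ Dgh ∧ wLi x ∈ Dgh ∧ wRi x ∈ Dgh) ∧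
     (∀ x y, x ∈ Dgh → y ∈ Dgh →
        wLf (x + y) = wLf x + wLf y ∧ wRf (x + y) = wRf x + wRf y ∧
        wLi (x + y) = wLi x + wLi y ∧ wRi (x + y) = wRi x + wRi y) ∧
     (∀ x y, x ∈ Dgh → y ∈ Dgh →
        wLf (x * y) = wLf x * y ∧ wRf (x * y) = x * wRf y ∧ wRf x * y = x * wLf y) ∧
     (∀ x y, x ∈ Dgh → y ∈ Dgh →
        wLi (x * y) = wLi x * y ∧ wRi (x * y) = x * wRi y ∧ wRi x * y = x * wLi y) ∧
     (∀ x ∈ Dgh, wLi (wLf x) = x ∧ wLf (wLi x) = x ∧ wRi (wRf x) = x ∧ wRf (wRi x) = x)) :=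
  twisting_is_multiplier_general Bc hgrmul hpr Lu Lv Ru Rv hLu_mem hLv_mem hRu_mem hRv_mem hLu_add
    hLv_add hRu_add hRv_add hLu_lin hLv_lin hRu_lin hRv_lin hLuLv hLvLu hRuRv hRvRu hLu_piece₁
    hLu_piece₂ hLv_piece₁ hLv_piece₂ hRu_piece₂ hRv_piece₁ hu_compat hv_compat g h
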